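/- 2×2×2 Abalone starting from the Belgian-daisy-type configuration B1 is a draw under optimal play: from B1, every optimal line of play remains forever within the set S = {B1, B2, B3, ±B6, ±B9, ±B10, ±B13} of constellations, so o(B1) = D. -/

import Mathlib

/-- An abstract two-player game with perfect information and alternating moves.
`true` denotes Left (Black) and `false` denotes Right (Gray). -/
structure AGame (P : Type*) where
  /-- `move pl p q` : player `pl` has a legal move from position `p` to position `q`. -/
  move : Bool → P → P → Prop
  /-- `win pl p` : the position `p` is a terminal win for player `pl`. -/
  win : Bool → P → Prop

namespace AGame

variable {P : Type*}

/-- `FW G pl turn p` : player `pl` can force a win (in finitely many moves)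
from position `p` when it is `turn`'s move. -/
inductive FW (G : AGame P) (pl : Bool) : Bool → P → Prop
  | terminal (turn : Bool) (p : P) : G.win pl p → FW G pl turn p
  | self (p q : P) : ¬ G.win (!pl) p → G.move pl p q → FW G pl (!pl) q → FW G pl pl p
  | opp (p : P) : ¬ G.win (!pl) p → (∃ q, G.move (!pl) p q) →
      (∀ q, G.move (!pl) p q → FW G pl pl q) → FW G pl (!pl) p

/-- Outcome class `L` : Left (Black) always wins, whoever moves first. -/
def OutL (G : AGame P) (p : P) : Prop := G.FW true true p ∧ G.FW true false p

/-- Outcome class `R` : Right (Gray) always wins, whoever moves first. -/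
def OutR (G : AGame P) (p : P) : Prop := G.FW false false p ∧ G.FW false true p

/-- Outcome class `N` : whoever moves next wins. -/
def OutN (G : AGame P) (p : P) : Prop := G.FW true true p ∧ G.FW false false p

/-- Outcome class `D` : neither player can force a win (optimal play is an infinite draw). -/
def OutD (G : AGame P) (p : P) : Prop :=
  ¬ G.FW true true p ∧ ¬ G.FW true false p ∧ ¬ G.FW false true p ∧ ¬ G.FW false false p

/-- Outcome class `N̂` : Left wins moving first, and the game is a draw if Right moves first. -/
def OutNhat (G : AGame P) (p : P) : Prop :=
  G.FW true true p ∧ ¬ G.FW true false p ∧ ¬ G.FW false false p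

/-- Outcome class `Ň` : Right wins moving first, and the game is a draw if Left moves first. -/
def OutNcheck (G : AGame P) (p : P) : Prop :=
  G.FW false false p ∧ ¬ G.FW false true p ∧ ¬ G.FW true true p

end AGame

namespace Abalone

/-- A board cell, in axial hexagonal coordinates `(q, r)` where `q` is the column. -/
abbrev Cell : Type := ℤ × ℤ

/-- A constellation: each cell carries a black marble (`some true`),
a gray marble (`some false`), or is empty (`none`). -/
abbrev Pos : Type := Cell → Option Bool

/-- The six unit directions of the hexagonal grid. -/
def dirs : List Cell := [(1, 0), (0, 1), (-1, 1), (-1, 0), (0, -1), (1, -1)]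

/-- Add a direction to a cell. -/
def addc (x d : Cell) : Cell := (x.1 + d.1, x.2 + d.2)

/-- The cell `n` steps from `x` in direction `d`. -/
def stepc (x : Cell) (n : ℕ) (d : Cell) : Cell := (x.1 + (n : ℤ) * d.1, x.2 + (n : ℤ) * d.2)

/-- The opposite direction. -/
def negd (d : Cell) : Cell := (-d.1, -d.2)

open Classical in
/-- The result of shifting the line of `len` marbles starting one step after `x`
(in direction `d`, with the marble at `x` itself moving into the vacated space):
cell `x` is vacated, each cell `x + i·d` (`1 ≤ i ≤ len`) receives the content of its
predecessor, and marbles shifted off the board are removed. -/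
noncomputable def shiftResult (board : Finset Cell) (c : Pos) (x d : Cell) (len : ℕ) : Pos :=
  fun y =>
    if y ∉ board then none
    else if y = x then none
    else if ∃ i : ℕ, 1 ≤ i ∧ i ≤ len ∧ y = stepc x i d then c (addc y (negd d))
    else c y

/-- In-line movement (including sumito pushes): player `pl` moves a line of `k` of their
own contiguous marbles (`1 ≤ k ≤ maxG`) one step in the line's direction `d`, possibly
pushing a strictly shorter opposing line of `m < k` marbles, the leading opposing marble
being pushed either onto an empty board cell or off the board. -/
def InlineMove (board : Finset Cell) (maxG : ℕ) (pl : Bool) (c c' : Pos) : Prop :=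
  ∃ x d, d ∈ dirs ∧ ∃ k m : ℕ,
    1 ≤ k ∧ k ≤ maxG ∧ m < k ∧
    (∀ i < k, stepc x i d ∈ board ∧ c (stepc x i d) = some pl) ∧
    (∀ i, k ≤ i → i < k + m → stepc x i d ∈ board ∧ c (stepc x i d) = some (!pl)) ∧
    ((m = 0 ∧ stepc x k d ∈ board ∧ c (stepc x k d) = none) ∨
      (1 ≤ m ∧ (stepc x (k + m) d ∉ board ∨ c (stepc x (k + m) d) = none))) ∧
    c' = shiftResult board c x d (k + m)

open Classical in
/-- The result of a broadside move: the `k` marbles at `x + i·d` (`i < k`) each move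
one step in direction `e`. -/
noncomputable def broadResult (c : Pos) (pl : Bool) (x d e : Cell) (k : ℕ) : Pos :=
  fun y =>
    if ∃ i < k, y = stepc x i d then none
    else if ∃ i < k, y = addc (stepc x i d) e then some pl
    else c y

/-- Broadside movement: player `pl` moves a line of `k` of their own contiguous marbles
(`1 ≤ k ≤ maxG`, the line in direction `d`) one step in a direction `e` not along the
line, each marble landing on an empty board cell. -/
def BroadsideMove (board : Finset Cell) (maxG : ℕ) (pl : Bool) (c c' : Pos) : Prop :=
  ∃ x d e, d ∈ dirs ∧ e ∈ dirs ∧ e ≠ d ∧ e ≠ negd d ∧ ∃ k : ℕ,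
    1 ≤ k ∧ k ≤ maxG ∧
    (∀ i < k, stepc x i d ∈ board ∧ c (stepc x i d) = some pl) ∧
    (∀ i < k, addc (stepc x i d) e ∈ board ∧ c (addc (stepc x i d) e) = none) ∧
    c' = broadResult c pl x d e k

/-- A legal Abalone move for player `pl`. -/
def Move (board : Finset Cell) (maxG : ℕ) (pl : Bool) (c c' : Pos) : Prop :=
  InlineMove board maxG pl c c' ∨ BroadsideMove board maxG pl c c'

/-- The number of marbles of player `pl` on the board. -/
def countM (board : Finset Cell) (pl : Bool) (c : Pos) : ℕ :=
  (board.filter (fun y => c y = some pl)).card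

/-- Player `pl` has won: the opponent has fewer than `n` marbles left,
i.e. at least one opposing marble has been pushed off the board. -/
def Wins (board : Finset Cell) (n : ℕ) (pl : Bool) (c : Pos) : Prop :=
  countM board (!pl) c < n

/-- The negative of a constellation: swap black and gray marbles. -/
def negP (c : Pos) : Pos := fun y => (c y).map (fun b => !b)

end Abalone

namespace Abalone

/-! ### The 2×2×2 Abalone board

A hexagonal grid of 7 cells (columns of sizes 2, 3, 2). In axial coordinates, the
left column is `lt = (-1,0)` (top), `lb = (-1,1)` (bottom); the middle column is
`mt = (0,-1)`, `mm = (0,0)`, `mb = (0,1)`; the right column is `rt = (1,-1)`,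
`rb = (1,0)`. Each player has 2 marbles, may move 1–2 contiguous marbles, a 2-line
may push 1 opposing marble, and a player wins by ejecting one opposing marble. -/

def lt : Cell := (-1, 0)
def lb : Cell := (-1, 1)
def mt : Cell := (0, -1)
def mm : Cell := (0, 0)
def mb : Cell := (0, 1)
def rt : Cell := (1, -1)
def rb : Cell := (1, 0)

def board222 : Finset Cell := {lt, lb, mt, mm, mb, rt, rb}

/-- 2×2×2 Abalone as a game: moves of 1–2 contiguous marbles, win by
reducing the opponent to fewer than 2 marbles. -/
def G222 : AGame Pos :=
  { move := Move board222 2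
    win := Wins board222 2 }

/-- The constellation with black marbles on `b1, b2` and gray marbles on `g1, g2`. -/
def mk2 (b1 b2 g1 g2 : Cell) : Pos := fun y =>
  if y = b1 ∨ y = b2 then some true
  else if y = g1 ∨ y = g2 then some false
  else none

/-- The 14 boards `B0`–`B13` of the paper (Figure 4). -/
def B0 : Pos := mk2 lt lb rt rb
def B1 : Pos := mk2 lt rb lb rt
def B2 : Pos := mk2 lt rt lb rb
def B3 : Pos := mk2 lt mb lb mt
def B4 : Pos := mk2 lt mt lb mb
def B5 : Pos := mk2 mt mb lt lb
def B6 : Pos := mk2 lt rb lb mt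
def B7 : Pos := mk2 rb mt lt lb
def B8 : Pos := mk2 lt mm mb rb
def B9 : Pos := mk2 lt mm mb rt
def B10 : Pos := mk2 lt mm lb rt
def B11 : Pos := mk2 lt mm lb mb
def B12 : Pos := mk2 lt mm lb rb
def B13 : Pos := mk2 lt mm lb mt

end Abalone

/-!
Call a set `R` of positions a trap for a player if, whenever that player is to move on a
position of `R`, they have not won yet and after each of their moves the opponent, not having
lost, can move to a position that a symmetry of the game sends back into `R`. Following such
returns, the opponent survives every branch of a would-be winning strategy, so the player can
force a win neither from `R` nor from any position where the opponent can return to `R`.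

For Black, the paper's set `S` together with `-B11` is a trap in 2×2×2 Abalone, the symmetries
being the twelve rotations and reflections of the hexagon; this is checked by letting the kernel
run through all moves. `B1` lies in `S`, Gray can move from `B1` into the trap, and swapping the
colours turns Gray's forced wins from `B1` into Black's from `-B1`, which is a reflection of `B1`.
-/

namespace AGame

variable {P : Type*} (G : AGame P)

def Aut : Subgroup (Equiv.Perm P) where
  carrier :=
    {σ | ∀ pl p q, (G.move pl (σ p) (σ q) ↔ G.move pl p q) ∧ (G.win pl (σ p) ↔ G.win pl p)}
  mul_mem' hσ hτ pl p q :=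
    ⟨(hσ pl _ _).1.trans (hτ pl p q).1, (hσ pl _ q).2.trans (hτ pl p q).2⟩
  one_mem' _ _ _ := ⟨Iff.rfl, Iff.rfl⟩
  inv_mem' {σ} hσ pl p q := by
    simpa using And.intro (hσ pl (σ⁻¹ p) (σ⁻¹ q)).1.symm (hσ pl (σ⁻¹ p) (σ⁻¹ q)).2.symm

def CanReturn (pl : Bool) (R : Set P) (q : P) : Prop :=
  ¬ G.win pl q ∧ ∃ s, G.move (!pl) q s ∧ ∃ σ ∈ G.Aut, σ s ∈ R

def IsTrap (pl : Bool) (R : Set P) : Prop :=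
  ∀ r ∈ R, ¬ G.win pl r ∧ ∀ q, G.move pl r q → G.CanReturn pl R q

variable {G} {pl : Bool} {R : Set P}

theorem IsTrap.not_mem_of_FW (hR : G.IsTrap pl R) {t : Bool} {p : P} (h : G.FW pl t p) :
    (t = pl → ∀ σ ∈ G.Aut, σ p ∉ R) ∧ (t = !pl → ∀ σ ∈ G.Aut, ¬ G.CanReturn pl R (σ p)) := by
  induction h with
  | terminal t p hwin =>
    exact ⟨fun _ σ hσ hp => (hR _ hp).1 ((hσ pl p p).2.2 hwin),
      fun _ σ hσ hp => hp.1 ((hσ pl p p).2.2 hwin)⟩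
  | self p q _ hmove _ ih =>
    refine ⟨fun _ σ hσ hp => ?_, fun h => absurd h (by simp)⟩
    exact ih.2 rfl σ hσ ((hR _ hp).2 _ ((hσ pl p q).1.2 hmove))
  | opp p _ _ _ ih =>
    refine ⟨fun h => absurd h.symm (by simp), fun _ σ hσ ⟨_, s, hs, τ, hτ, hsR⟩ => ?_⟩
    have hmove : G.move (!pl) p (σ⁻¹ s) := by
      simpa using (hσ (!pl) p (σ⁻¹ s)).1.1 (by simpa using hs)
    exact (ih _ hmove).1 rfl (τ * σ) (G.Aut.mul_mem hτ hσ) (by simpa using hsR)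

theorem IsTrap.not_FW_of_mem (hR : G.IsTrap pl R) {σ : Equiv.Perm P} (hσ : σ ∈ G.Aut) {p : P}
    (hp : σ p ∈ R) : ¬ G.FW pl pl p :=
  fun h => (hR.not_mem_of_FW h).1 rfl σ hσ hp

theorem IsTrap.not_FW_of_canReturn (hR : G.IsTrap pl R) {q : P} (hq : G.CanReturn pl R q) :
    ¬ G.FW pl (!pl) q :=
  fun h => (hR.not_mem_of_FW h).2 rfl 1 G.Aut.one_mem hq

theorem FW.swap {φ : Equiv.Perm P} (hmove : ∀ pl p q, G.move pl (φ p) (φ q) ↔ G.move (!pl) p q)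
    (hwin : ∀ pl p, G.win pl (φ p) ↔ G.win (!pl) p) {t : Bool} {p : P} (h : G.FW pl t p) :
    G.FW (!pl) (!t) (φ p) := by
  induction h with
  | terminal t p hw => exact .terminal _ _ ((hwin _ _).2 (by simpa using hw))
  | self p q hnw hmv _ ih =>
    refine .self _ _ ?_ ((hmove _ _ _).2 (by simpa using hmv)) (by simpa using ih)
    simpa [hwin] using hnw
  | opp p hnw hex _ ih =>
    refine .opp _ (by simpa [hwin] using hnw) ?_ fun q hq => ?_
    · obtain ⟨q, hq⟩ := hex
      exact ⟨φ q, (hmove _ _ _).2 (by simpa using hq)⟩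
    · simpa using ih (φ.symm q) ((hmove _ _ _).1 (by simpa using hq))

end AGame

theorem Set.Finite.apply_mem_iff_of_mapsTo {α : Type*} {f : α → α} {s : Set α} (hs : s.Finite)
    (hf : f.Injective) (hm : Set.MapsTo f s s) (y : α) : f y ∈ s ↔ y ∈ s := by
  refine ⟨fun h => ?_, fun h => hm h⟩
  obtain ⟨z, hz, hzy⟩ := ((hs.injOn_iff_bijOn_of_mapsTo hm).1 hf.injOn).surjOn h
  exact hf hzy ▸ hz

namespace Abalone

theorem stepc_eq_add (x : Cell) (n : ℕ) (d : Cell) : stepc x n d = x + (n : ℤ) • d := by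
  ext <;> simp [stepc]

section Relabel

variable (σ : Cell ≃ₗ[ℤ] Cell)

theorem map_stepc (x : Cell) (n : ℕ) (d : Cell) : σ (stepc x n d) = stepc (σ x) n (σ d) := by
  rw [stepc_eq_add, stepc_eq_add, map_add, map_zsmul]

theorem map_addc (x d : Cell) : σ (addc x d) = addc (σ x) (σ d) := map_add σ x d

theorem map_negd (d : Cell) : σ (negd d) = negd (σ d) := map_neg σ d

def relabel : Equiv.Perm Pos := σ.toEquiv.arrowCongr (Equiv.refl _)

@[simp] theorem relabel_apply (c : Pos) (y : Cell) : relabel σ c y = c (σ.symm y) := rfl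

@[simp] theorem relabel_symm_relabel (c : Pos) : relabel σ.symm (relabel σ c) = c := by
  funext y; simp

variable {σ} {board : Finset Cell} {maxG : ℕ} {pl : Bool} {c c' : Pos}

theorem shiftResult_relabel (hb : ∀ y, σ y ∈ board ↔ y ∈ board) (x d : Cell) (len : ℕ) :
    shiftResult board (relabel σ c) (σ x) (σ d) len = relabel σ (shiftResult board c x d len) := by
  classical
  funext y
  obtain ⟨z, rfl⟩ := σ.surjective y
  have hline (i : ℕ) : σ z = stepc (σ x) i (σ d) ↔ z = stepc x i d := by
    rw [← map_stepc, σ.injective.eq_iff]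
  simp only [shiftResult, relabel_apply, LinearEquiv.symm_apply_apply, hb, σ.injective.eq_iff,
    hline, ← map_negd, ← map_addc]

theorem broadResult_relabel (x d e : Cell) (k : ℕ) :
    broadResult (relabel σ c) pl (σ x) (σ d) (σ e) k = relabel σ (broadResult c pl x d e k) := by
  classical
  funext y
  obtain ⟨z, rfl⟩ := σ.surjective y
  have hline (i : ℕ) : σ z = stepc (σ x) i (σ d) ↔ z = stepc x i d := by
    rw [← map_stepc, σ.injective.eq_iff]
  have htarget (i : ℕ) : σ z = addc (stepc (σ x) i (σ d)) (σ e) ↔ z = addc (stepc x i d) e := by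
    rw [← map_stepc, ← map_addc, σ.injective.eq_iff]
  simp only [broadResult, relabel_apply, LinearEquiv.symm_apply_apply, hline, htarget]

theorem InlineMove.relabel (hb : ∀ y, σ y ∈ board ↔ y ∈ board) (hd : ∀ d ∈ dirs, σ d ∈ dirs)
    (h : InlineMove board maxG pl c c') :
    InlineMove board maxG pl (relabel σ c) (relabel σ c') := by
  obtain ⟨x, d, hdir, k, m, hk1, hk2, hmk, hown, hopp, hend, rfl⟩ := h
  refine ⟨σ x, σ d, hd d hdir, k, m, hk1, hk2, hmk, ?_, ?_, ?_,
    (shiftResult_relabel hb x d (k + m)).symm⟩ <;>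
  simpa only [← map_stepc, relabel_apply, LinearEquiv.symm_apply_apply, hb]

theorem BroadsideMove.relabel (hb : ∀ y, σ y ∈ board ↔ y ∈ board) (hd : ∀ d ∈ dirs, σ d ∈ dirs)
    (h : BroadsideMove board maxG pl c c') :
    BroadsideMove board maxG pl (relabel σ c) (relabel σ c') := by
  obtain ⟨x, d, e, hdir, hedir, hed, hed', k, hk1, hk2, hown, htgt, rfl⟩ := h
  refine ⟨σ x, σ d, σ e, hd d hdir, hd e hedir, σ.injective.ne hed,
    by rw [← map_negd]; exact σ.injective.ne hed', k, hk1, hk2, ?_, ?_,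
    (broadResult_relabel x d e k).symm⟩ <;>
  simpa only [← map_stepc, ← map_addc, relabel_apply, LinearEquiv.symm_apply_apply, hb]

theorem Move.relabel (hb : ∀ y, σ y ∈ board ↔ y ∈ board) (hd : ∀ d ∈ dirs, σ d ∈ dirs)
    (h : Move board maxG pl c c') : Move board maxG pl (relabel σ c) (relabel σ c') :=
  h.imp (InlineMove.relabel hb hd) (BroadsideMove.relabel hb hd)

theorem countM_relabel (hb : ∀ y, σ y ∈ board ↔ y ∈ board) :
    countM board pl (relabel σ c) = countM board pl c := by
  have hb' (y : Cell) : σ.symm y ∈ board ↔ y ∈ board := by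
    rw [← hb, LinearEquiv.apply_symm_apply]
  refine Finset.card_nbij' σ.symm σ (fun y hy => ?_) (fun y hy => ?_)
    (fun y _ => σ.apply_symm_apply y) (fun y _ => σ.symm_apply_apply y) <;>
  simp only [Finset.coe_filter, Set.mem_ofPred_eq] at hy ⊢
  · exact ⟨(hb' y).2 hy.1, hy.2⟩
  · exact ⟨(hb y).2 hy.1, by rw [relabel_apply, LinearEquiv.symm_apply_apply]; exact hy.2⟩

end Relabel

def IsBoardSymm (σ : Cell ≃ₗ[ℤ] Cell) : Prop :=
  (∀ y, σ y ∈ board222 ↔ y ∈ board222) ∧ ∀ d, σ d ∈ dirs ↔ d ∈ dirs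

theorem IsBoardSymm.symm {σ : Cell ≃ₗ[ℤ] Cell} (hσ : IsBoardSymm σ) : IsBoardSymm σ.symm :=
  ⟨fun y => by rw [← hσ.1, LinearEquiv.apply_symm_apply],
    fun d => by rw [← hσ.2, LinearEquiv.apply_symm_apply]⟩

theorem relabel_mem_aut {σ : Cell ≃ₗ[ℤ] Cell} (hσ : IsBoardSymm σ) : relabel σ ∈ G222.Aut := by
  refine fun pl p q => ⟨⟨fun h => ?_, Move.relabel hσ.1 fun d => (hσ.2 d).2⟩, ?_⟩
  · simpa [G222] using Move.relabel hσ.symm.1 (fun d => (hσ.symm.2 d).2) h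
  · simp only [G222, Wins, countM_relabel hσ.1]

def rot60 : Cell ≃ₗ[ℤ] Cell where
  toFun x := (-x.2, x.1 + x.2)
  invFun x := (x.1 + x.2, -x.1)
  map_add' x y := by ext <;> simp <;> ring
  map_smul' a x := by ext <;> simp [mul_add]
  left_inv x := by ext <;> simp
  right_inv x := by ext <;> simp

def reflect : Cell ≃ₗ[ℤ] Cell where
  toFun x := (x.2, x.1)
  invFun x := (x.2, x.1)
  map_add' _ _ := rfl
  map_smul' _ _ := rfl
  left_inv _ := rfl
  right_inv _ := rfl

def boardSymms : List (Cell ≃ₗ[ℤ] Cell) :=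
  (List.range 6).flatMap fun k => [rot60 ^ k, rot60 ^ k * reflect]

theorem isBoardSymm_of_mem_boardSymms {σ : Cell ≃ₗ[ℤ] Cell} (hσ : σ ∈ boardSymms) :
    IsBoardSymm σ := by
  have h : ∀ σ ∈ boardSymms, (∀ y ∈ board222, σ y ∈ board222) ∧ ∀ d ∈ dirs, σ d ∈ dirs := by
    decide
  exact ⟨board222.finite_toSet.apply_mem_iff_of_mapsTo σ.injective (h σ hσ).1,
    dirs.finite_toSet.apply_mem_iff_of_mapsTo σ.injective (h σ hσ).2⟩

section ColourSwap

@[simp] theorem negP_negP (c : Pos) : negP (negP c) = c := by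
  funext y
  simp only [negP, Option.map_map]
  cases c y <;> simp

theorem negP_eq_some {c : Pos} {y : Cell} {b : Bool} : negP c y = some b ↔ c y = some (!b) := by
  cases h : c y with
  | none => simp [negP, h]
  | some a => cases a <;> cases b <;> simp [negP, h]

@[simp] theorem negP_eq_none {c : Pos} {y : Cell} : negP c y = none ↔ c y = none := by
  simp [negP]

variable {board : Finset Cell} {maxG : ℕ} {pl : Bool} {c c' : Pos}

theorem shiftResult_negP (x d : Cell) (len : ℕ) :
    shiftResult board (negP c) x d len = negP (shiftResult board c x d len) := by
  funext y
  simp only [shiftResult, negP]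
  split_ifs <;> rfl

theorem broadResult_negP (x d e : Cell) (k : ℕ) :
    broadResult (negP c) (!pl) x d e k = negP (broadResult c pl x d e k) := by
  funext y
  simp only [broadResult, negP]
  split_ifs <;> simp

theorem InlineMove.negP (h : InlineMove board maxG pl c c') :
    InlineMove board maxG (!pl) (negP c) (negP c') := by
  obtain ⟨x, d, hd, k, m, hk1, hk2, hmk, hown, hopp, hend, rfl⟩ := h
  refine ⟨x, d, hd, k, m, hk1, hk2, hmk, ?_, ?_, ?_, (shiftResult_negP x d (k + m)).symm⟩ <;>
  simpa [negP_eq_some]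

theorem BroadsideMove.negP (h : BroadsideMove board maxG pl c c') :
    BroadsideMove board maxG (!pl) (negP c) (negP c') := by
  obtain ⟨x, d, e, hd, he, hed, hed', k, hk1, hk2, hown, htgt, rfl⟩ := h
  refine ⟨x, d, e, hd, he, hed, hed', k, hk1, hk2, ?_, ?_, (broadResult_negP x d e k).symm⟩ <;>
  simpa [negP_eq_some]

theorem Move.negP (h : Move board maxG pl c c') : Move board maxG (!pl) (negP c) (negP c') :=
  h.imp InlineMove.negP BroadsideMove.negP

theorem countM_negP : countM board pl (negP c) = countM board (!pl) c := by
  simp only [countM, negP_eq_some]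

end ColourSwap

def swapColours : Equiv.Perm Pos := Function.Involutive.toPerm negP negP_negP

@[simp] theorem swapColours_apply (c : Pos) : swapColours c = negP c := rfl

theorem move_swapColours (pl : Bool) (p q : Pos) :
    G222.move pl (swapColours p) (swapColours q) ↔ G222.move (!pl) p q := by
  simp only [G222, swapColours_apply]
  exact ⟨fun h => by simpa using h.negP, fun h => by simpa using h.negP⟩

theorem win_swapColours (pl : Bool) (p : Pos) :
    G222.win pl (swapColours p) ↔ G222.win (!pl) p := by
  simp only [G222, Wins, swapColours_apply, countM_negP, Bool.not_not]

section MoveConditions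

variable (board : Finset Cell) (maxG : ℕ) (pl : Bool) (c : Pos)

def InlineAt (x d : Cell) (k m : ℕ) : Prop :=
  1 ≤ k ∧ k ≤ maxG ∧ m < k ∧
    (∀ i < k, stepc x i d ∈ board ∧ c (stepc x i d) = some pl) ∧
    (∀ i, k ≤ i → i < k + m → stepc x i d ∈ board ∧ c (stepc x i d) = some (!pl)) ∧
    ((m = 0 ∧ stepc x k d ∈ board ∧ c (stepc x k d) = none) ∨
      (1 ≤ m ∧ (stepc x (k + m) d ∉ board ∨ c (stepc x (k + m) d) = none)))

def BroadsideAt (x d e : Cell) (k : ℕ) : Prop :=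
  e ≠ d ∧ e ≠ negd d ∧ 1 ≤ k ∧ k ≤ maxG ∧
    (∀ i < k, stepc x i d ∈ board ∧ c (stepc x i d) = some pl) ∧
    (∀ i < k, addc (stepc x i d) e ∈ board ∧ c (addc (stepc x i d) e) = none)

variable {board maxG pl c}

theorem inlineMove_iff {c' : Pos} : InlineMove board maxG pl c c' ↔
    ∃ x, ∃ d ∈ dirs, ∃ k m, InlineAt board maxG pl c x d k m ∧
      c' = shiftResult board c x d (k + m) := by
  simp only [InlineMove, InlineAt, exists_and_left, and_assoc]

theorem broadsideMove_iff {c' : Pos} : BroadsideMove board maxG pl c c' ↔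
    ∃ x, ∃ d ∈ dirs, ∃ e ∈ dirs, ∃ k, BroadsideAt board maxG pl c x d e k ∧
      c' = broadResult c pl x d e k := by
  simp only [BroadsideMove, BroadsideAt, exists_and_left, and_assoc]

end MoveConditions

section OnBoard

variable {board : Finset Cell}

def OnBoard (board : Finset Cell) (c : Pos) : Prop := ∀ y ∉ board, c y = none

theorem onBoard_shiftResult (c : Pos) (x d : Cell) (len : ℕ) :
    OnBoard board (shiftResult board c x d len) :=
  fun y hy => by simp [shiftResult, hy]

theorem OnBoard.broadResult {c : Pos} (hc : OnBoard board c) {pl : Bool} {x d e : Cell} {k : ℕ}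
    (hown : ∀ i < k, stepc x i d ∈ board ∧ c (stepc x i d) = some pl)
    (htgt : ∀ i < k, addc (stepc x i d) e ∈ board ∧ c (addc (stepc x i d) e) = none) :
    OnBoard board (broadResult c pl x d e k) := by
  intro y hy
  have hline : ¬ ∃ i < k, y = stepc x i d := by rintro ⟨i, hi, rfl⟩; exact hy (hown i hi).1
  have htarget : ¬ ∃ i < k, y = addc (stepc x i d) e := by
    rintro ⟨i, hi, rfl⟩; exact hy (htgt i hi).1
  simp only [Abalone.broadResult, if_neg hline, if_neg htarget]
  exact hc y hy

theorem OnBoard.of_move {maxG : ℕ} {pl : Bool} {c c' : Pos} (hc : OnBoard board c)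
    (h : Move board maxG pl c c') : OnBoard board c' := by
  rcases h with ⟨x, d, -, k, m, -, -, -, -, -, -, rfl⟩ |
    ⟨x, d, e, -, -, -, -, k, -, -, hown, htgt, rfl⟩
  · exact onBoard_shiftResult c x d (k + m)
  · exact hc.broadResult hown htgt

theorem OnBoard.relabel {σ : Cell ≃ₗ[ℤ] Cell} (hb : ∀ y, σ y ∈ board ↔ y ∈ board) {c : Pos}
    (hc : OnBoard board c) : OnBoard board (relabel σ c) := fun y hy => by
  rw [relabel_apply]
  exact hc _ (by rw [← hb, LinearEquiv.apply_symm_apply]; exact hy)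

theorem OnBoard.negP {c : Pos} (hc : OnBoard board c) : OnBoard board (negP c) :=
  fun y hy => by simp [Abalone.negP, hc y hy]

theorem onBoard_mk2 {b1 b2 g1 g2 : Cell} (h : ∀ y ∈ [b1, b2, g1, g2], y ∈ board) :
    OnBoard board (mk2 b1 b2 g1 g2) := by
  intro y hy
  have : y ∉ [b1, b2, g1, g2] := fun hy' => hy (h y hy')
  simp only [List.mem_cons, List.not_mem_nil, or_false, not_or] at this
  simp [mk2, this]

end OnBoard

section Computation

def cells : List Cell := [lt, lb, mt, mm, mb, rt, rb]

theorem mem_board222_iff_mem_cells (y : Cell) : y ∈ board222 ↔ y ∈ cells := by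
  simp [board222, cells]

instance decidableMemBoard222 : DecidablePred (· ∈ board222) :=
  fun y => decidable_of_iff _ (mem_board222_iff_mem_cells y).symm

instance decidableExistsLeLe (lo hi : ℕ) (P : ℕ → Prop) [DecidablePred P] :
    Decidable (∃ i, lo ≤ i ∧ i ≤ hi ∧ P i) :=
  decidable_of_iff (∃ i < hi + 1, lo ≤ i ∧ P i) <| by
    constructor
    · rintro ⟨i, hi, hlo, hp⟩; exact ⟨i, hlo, by omega, hp⟩
    · rintro ⟨i, hlo, hi, hp⟩; exact ⟨i, by omega, hlo, hp⟩

instance (board : Finset Cell) [DecidablePred (· ∈ board)] (maxG : ℕ) (pl : Bool) (c : Pos)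
    (x d : Cell) (k m : ℕ) : Decidable (InlineAt board maxG pl c x d k m) := by
  unfold InlineAt; infer_instance

instance (board : Finset Cell) [DecidablePred (· ∈ board)] (maxG : ℕ) (pl : Bool) (c : Pos)
    (x d e : Cell) (k : ℕ) : Decidable (BroadsideAt board maxG pl c x d e k) := by
  unfold BroadsideAt; infer_instance

instance (board : Finset Cell) (n : ℕ) (pl : Bool) (c : Pos) : Decidable (Wins board n pl c) :=
  Nat.decLt _ _

/- `shiftResult` and `broadResult` decide their conditions classically; these copies decide
them constructively, so that the kernel can evaluate them. -/

def shiftResult' (board : Finset Cell) [DecidablePred (· ∈ board)] (c : Pos) (x d : Cell)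
    (len : ℕ) : Pos := fun y =>
  if y ∉ board then none
  else if y = x then none
  else if ∃ i : ℕ, 1 ≤ i ∧ i ≤ len ∧ y = stepc x i d then c (addc y (negd d))
  else c y

def broadResult' (c : Pos) (pl : Bool) (x d e : Cell) (k : ℕ) : Pos := fun y =>
  if ∃ i < k, y = stepc x i d then none
  else if ∃ i < k, y = addc (stepc x i d) e then some pl
  else c y

theorem shiftResult'_eq (board : Finset Cell) [DecidablePred (· ∈ board)] (c : Pos) (x d : Cell)
    (len : ℕ) : shiftResult' board c x d len = shiftResult board c x d len := by
  funext y
  unfold shiftResult' shiftResult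
  congr

theorem broadResult'_eq (c : Pos) (pl : Bool) (x d e : Cell) (k : ℕ) :
    broadResult' c pl x d e k = broadResult c pl x d e k := by
  unfold broadResult' broadResult
  congr

/- A position is stored as the base-3 number whose digits are the contents of `cells`: the
kernel then evaluates each cell of a position once, not once per lookup. -/

def digit : Option Bool → ℕ
  | none => 0
  | some true => 1
  | some false => 2

def ofDigit : ℕ → Option Bool
  | 1 => some true
  | 2 => some false
  | _ => none

def encode : List Cell → Pos → ℕ
  | [], _ => 0
  | z :: L, c => digit (c z) + 3 * encode L c

def decode : List Cell → ℕ → Pos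
  | [], _, _ => none
  | z :: L, n, y => if y = z then ofDigit (n % 3) else decode L (n / 3) y

theorem decode_encode (L : List Cell) (c : Pos) (y : Cell) :
    decode L (encode L c) y = if y ∈ L then c y else none := by
  induction L with
  | nil => rfl
  | cons z L ih =>
    have hlt : digit (c z) < 3 := by
      rcases c z with _ | _ | _ <;> simp [digit]
    by_cases hy : y = z
    · subst hy
      simp only [decode, encode, if_true, List.mem_cons, true_or]
      rw [Nat.add_mul_mod_self_left, Nat.mod_eq_of_lt hlt]
      rcases c y with _ | _ | _ <;> rfl
    · simp only [decode, encode, hy, if_false, List.mem_cons, false_or]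
      rw [Nat.add_mul_div_left _ _ (by norm_num), Nat.div_eq_of_lt hlt, zero_add, ih]

def normalize (c : Pos) : Pos := decode cells (encode cells c)

theorem OnBoard.normalize_eq {c : Pos} (hc : OnBoard board222 c) : normalize c = c := by
  funext y
  rw [normalize, decode_encode]
  split_ifs with hy
  · rfl
  · exact (hc y (by rwa [mem_board222_iff_mem_cells])).symm

theorem OnBoard.eq_of_encode_eq {c c' : Pos} (hc : OnBoard board222 c) (hc' : OnBoard board222 c')
    (h : encode cells c = encode cells c') : c = c' := by
  rw [← hc.normalize_eq, ← hc'.normalize_eq, normalize, normalize, h]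

def ownLines (pl : Bool) (c : Pos) : List (Cell × Cell × ℕ) :=
  ((cells.filter (c · = some pl)).flatMap fun x => dirs.flatMap fun d =>
    [1, 2].map fun k => (x, d, k)).filter
      fun l => ∀ i < l.2.2, stepc l.1 i l.2.1 ∈ board222 ∧ c (stepc l.1 i l.2.1) = some pl

theorem mem_ownLines {pl : Bool} {c : Pos} {x d : Cell} {k : ℕ} (hd : d ∈ dirs) (hk1 : 1 ≤ k)
    (hk2 : k ≤ 2) (hown : ∀ i < k, stepc x i d ∈ board222 ∧ c (stepc x i d) = some pl) :
    (x, d, k) ∈ ownLines pl c := by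
  have hx := hown 0 hk1
  rw [stepc_eq_add, Nat.cast_zero, zero_smul, add_zero, mem_board222_iff_mem_cells] at hx
  have hk : k = 1 ∨ k = 2 := by omega
  simp only [ownLines, List.mem_filter, List.mem_flatMap, List.mem_map, decide_eq_true_eq]
  exact ⟨⟨x, hx, d, hd, k, by simpa using hk, rfl⟩, hown⟩

def moves (pl : Bool) (c : Pos) : List Pos :=
  (ownLines pl c).flatMap fun (x, d, k) =>
    ([0, 1].filterMap fun m =>
      if InlineAt board222 2 pl c x d k m then
        some (normalize (shiftResult' board222 c x d (k + m)))
      else none) ++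
    (dirs.filterMap fun e =>
      if BroadsideAt board222 2 pl c x d e k then some (normalize (broadResult' c pl x d e k))
      else none)

theorem mem_moves_iff {pl : Bool} {c c' : Pos} (hc : OnBoard board222 c) :
    c' ∈ moves pl c ↔ Move board222 2 pl c c' := by
  simp only [moves, List.mem_flatMap, List.mem_append, List.mem_filterMap,
    Option.ite_none_right_eq_some, Option.some.injEq, shiftResult'_eq, broadResult'_eq]
  constructor
  · rintro ⟨⟨x, d, k⟩, hl, ⟨m, -, h, rfl⟩ | ⟨e, he, h, rfl⟩⟩ <;>
      simp only [ownLines, List.mem_filter, List.mem_flatMap, List.mem_map] at hl <;>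
      obtain ⟨⟨x, -, d, hd, k, -, ⟨⟩⟩, -⟩ := hl
    · rw [(onBoard_shiftResult c x d (k + m)).normalize_eq]
      exact Or.inl (inlineMove_iff.2 ⟨x, d, hd, k, m, h, rfl⟩)
    · rw [(hc.broadResult h.2.2.2.2.1 h.2.2.2.2.2).normalize_eq]
      exact Or.inr (broadsideMove_iff.2 ⟨x, d, hd, e, he, k, h, rfl⟩)
  · rintro (h | h)
    · obtain ⟨x, d, hd, k, m, hat, rfl⟩ := inlineMove_iff.1 h
      obtain ⟨hk1, hk2, hmk, hown, -⟩ := id hat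
      have hm : m = 0 ∨ m = 1 := by omega
      exact ⟨(x, d, k), mem_ownLines hd hk1 hk2 hown, Or.inl ⟨m, by simpa using hm, hat,
        (onBoard_shiftResult c x d (k + m)).normalize_eq⟩⟩
    · obtain ⟨x, d, hd, e, he, k, hat, rfl⟩ := broadsideMove_iff.1 h
      obtain ⟨-, -, hk1, hk2, hown, htgt⟩ := id hat
      exact ⟨(x, d, k), mem_ownLines hd hk1 hk2 hown, Or.inr ⟨e, he, hat,
        (hc.broadResult hown htgt).normalize_eq⟩⟩

end Computation

section Certificate

def InOrbit (R : List Pos) (c : Pos) : Prop :=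
  ∃ σ ∈ boardSymms, ∃ r ∈ R, encode cells c = encode cells (relabel σ r)

def ReturnCheck (pl : Bool) (R : List Pos) (q : Pos) : Prop :=
  ¬ Wins board222 2 pl q ∧ ∃ s ∈ moves (!pl) q, InOrbit R s

def TrapCheck (pl : Bool) (R : List Pos) : Prop :=
  ∀ r ∈ R, ¬ Wins board222 2 pl r ∧ ∀ q ∈ moves pl r, ReturnCheck pl R q

instance (R : List Pos) (c : Pos) : Decidable (InOrbit R c) := by
  unfold InOrbit; infer_instance

instance (pl : Bool) (R : List Pos) (q : Pos) : Decidable (ReturnCheck pl R q) := by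
  unfold ReturnCheck; infer_instance

instance (pl : Bool) (R : List Pos) : Decidable (TrapCheck pl R) := by
  unfold TrapCheck; infer_instance

variable {pl : Bool} {R : List Pos}

theorem InOrbit.exists_aut (hR : ∀ r ∈ R, OnBoard board222 r) {c : Pos}
    (hc : OnBoard board222 c) (h : InOrbit R c) : ∃ τ ∈ G222.Aut, τ c ∈ {c | c ∈ R} := by
  obtain ⟨σ, hσ, r, hr, hcr⟩ := h
  have hσ := isBoardSymm_of_mem_boardSymms hσ
  have hc' : c = relabel σ r := hc.eq_of_encode_eq ((hR r hr).relabel hσ.1) hcr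
  exact ⟨(relabel σ)⁻¹, G222.Aut.inv_mem (relabel_mem_aut hσ), by simpa [hc'] using hr⟩

theorem canReturn_of_returnCheck (hR : ∀ r ∈ R, OnBoard board222 r) {q : Pos}
    (hq : OnBoard board222 q) (h : ReturnCheck pl R q) : G222.CanReturn pl {c | c ∈ R} q := by
  obtain ⟨hwin, s, hs, hsR⟩ := h
  have hmove := (mem_moves_iff hq).1 hs
  exact ⟨hwin, s, hmove, hsR.exists_aut hR (hq.of_move hmove)⟩

theorem isTrap_of_trapCheck (hR : ∀ r ∈ R, OnBoard board222 r) (h : TrapCheck pl R) :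
    G222.IsTrap pl {c | c ∈ R} := fun r hr =>
  ⟨(h r hr).1, fun q hq => canReturn_of_returnCheck hR ((hR r hr).of_move hq)
    ((h r hr).2 q ((mem_moves_iff (hR r hr)).2 hq))⟩

def S : List Pos := [B1, B2, B3, B6, negP B6, B9, negP B9, B10, negP B10, B13, negP B13]

def blackTrap : List Pos := negP B11 :: S

theorem onBoard_of_mem_blackTrap : ∀ c ∈ blackTrap, OnBoard board222 c := by
  simp only [blackTrap, S, List.forall_mem_cons, List.not_mem_nil, IsEmpty.forall_iff,
    implies_true, and_true]
  and_intros <;> first | exact onBoard_mk2 (by decide) | exact (onBoard_mk2 (by decide)).negP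

theorem trapCheck_blackTrap : TrapCheck true blackTrap := by decide +kernel

theorem returnCheck_blackTrap_B1 : ReturnCheck true blackTrap B1 := by decide +kernel

theorem returnCheck_blackTrap_negP_B1 : ReturnCheck true blackTrap (negP B1) := by
  decide +kernel

theorem inOrbit_blackTrap_negP_B1 : InOrbit blackTrap (negP B1) := by decide +kernel

end Certificate

end Abalone

open Abalone AGame in
/-- 2×2×2 Abalone from the Belgian-daisy-type starting configuration
`B1` is a draw under optimal play: `o(B1) = D` — neither player can force a win,
from either side to move, so optimal play continues forever. -/
theorem B1_draw : G222.OutD B1 := by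
  have hR := onBoard_of_mem_blackTrap
  have hB1 : B1 ∈ blackTrap := by simp [blackTrap, S]
  have htrap := isTrap_of_trapCheck hR trapCheck_blackTrap
  have hswap {t : Bool} {p : Pos} (h : G222.FW false t p) : G222.FW true (!t) (swapColours p) :=
    h.swap move_swapColours win_swapColours
  obtain ⟨σ, hσ, hσB1⟩ := inOrbit_blackTrap_negP_B1.exists_aut hR (hR B1 hB1).negP
  refine ⟨htrap.not_FW_of_mem G222.Aut.one_mem hB1,
    htrap.not_FW_of_canReturn (canReturn_of_returnCheck hR (hR B1 hB1) returnCheck_blackTrap_B1),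
    fun h => ?_, fun h => htrap.not_FW_of_mem hσ hσB1 (hswap h)⟩
  exact htrap.not_FW_of_canReturn
    (canReturn_of_returnCheck hR (hR B1 hB1).negP returnCheck_blackTrap_negP_B1) (hswap h)
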